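/- Let (G, 𝒫, 𝒯) be an instance of Partitioned Vertex Cover and let H be the Popular Matching instance constructed from it. If M is a popular matching in H, then U := {i ∈ V(G) : {a_i, b_i} ∈ M} is a solution of (G, 𝒫, 𝒯). -/

import Mathlib

open SimpleGraph

universe u

/-- A matching: a set of edges of `G` that are pairwise vertex-disjoint. -/
def IsMatching {W : Type u} (G : SimpleGraph W) (M : Set (Sym2 W)) : Prop :=
  M ⊆ G.edgeSet ∧ ∀ e ∈ M, ∀ e' ∈ M, e ≠ e' → ∀ v : W, v ∈ e → v ∉ e'

/-- `v` is matched by `M`. -/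
def Matched {W : Type u} (M : Set (Sym2 W)) (v : W) : Prop := ∃ w : W, s(v, w) ∈ M

open scoped Classical in
/-- `rank G pref M v = pref v (M(v))`, with the convention `|N(v)|+1` if `v` is unmatched. -/
noncomputable def rank {W : Type u} (G : SimpleGraph W) (pref : W → W → ℕ)
    (M : Set (Sym2 W)) (v : W) : ℕ :=
  if h : ∃ w : W, s(v, w) ∈ M then pref v h.choose else (G.neighborSet v).ncard + 1

/-- The number of vertices preferring `M` over `M'`. -/
noncomputable def vote {W : Type u} (G : SimpleGraph W) (pref : W → W → ℕ)
    (M M' : Set (Sym2 W)) : ℕ :=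
  {v : W | rank G pref M v < rank G pref M' v}.ncard

/-- A popular matching: no other matching is more popular. -/
def IsPopular {W : Type u} (G : SimpleGraph W) (pref : W → W → ℕ) (M : Set (Sym2 W)) : Prop :=
  IsMatching G M ∧
    ∀ M' : Set (Sym2 W), IsMatching G M' → vote G pref M' M ≤ vote G pref M M'

/-- Each vertex has a strict preference list: `pref v` is a bijection from the
neighborhood of `v` onto `{1, …, |N(v)|}`. -/
def HasPref {W : Type u} (G : SimpleGraph W) (pref : W → W → ℕ) : Prop :=
  ∀ v : W, Set.BijOn (pref v) (G.neighborSet v) (Set.Icc 1 (G.neighborSet v).ncard)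

/-- The edge `e ∉ M` is labeled `+2` by `label_M` (given rank function `rk`):
both endpoints prefer each other over their status in `M`. -/
def EdgePlus {W : Type u} (pref : W → W → ℕ) (rk : W → ℕ) (e : Sym2 W) : Prop :=
  ∃ x y : W, e = s(x, y) ∧ pref x y < rk x ∧ pref y x < rk y

/-- The edge `e ∉ M` is labeled `-2` by `label_M` (given rank function `rk`):
both endpoints prefer their status in `M` over each other. -/
def EdgeMinus {W : Type u} (pref : W → W → ℕ) (rk : W → ℕ) (e : Sym2 W) : Prop :=
  ∃ x y : W, e = s(x, y) ∧ rk x < pref x y ∧ rk y < pref y x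

/-- The graph `G_M`: the spanning subgraph of `G` consisting of the edges of `M`
together with the edges not labeled `-2`. -/
def GMgraph {W : Type u} (G : SimpleGraph W) (pref : W → W → ℕ) (M : Set (Sym2 W)) :
    SimpleGraph W where
  Adj x y := G.Adj x y ∧ (s(x, y) ∈ M ∨ ¬ EdgeMinus pref (rank G pref M) s(x, y))
  symm := by
    constructor
    intro x y h
    refine ⟨h.1.symm, ?_⟩
    rw [Sym2.eq_swap]
    exact h.2
  loopless := ⟨fun x h => G.ne_of_adj h.1 rfl⟩

/-- Consecutive edges alternate between `M` and non-`M`. -/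
def altRel {W : Type u} (M : Set (Sym2 W)) (e e' : Sym2 W) : Prop := e ∈ M ↔ e' ∉ M

/-- An alternating path (with respect to `M`) in a graph `G'`. -/
def IsAltPath {W : Type u} (M : Set (Sym2 W)) {G' : SimpleGraph W} {x y : W}
    (p : G'.Walk x y) : Prop :=
  p.IsPath ∧ List.Chain' (altRel M) p.edges ∧
    (∀ e, p.edges.head? = some e → e ∉ M → ¬ Matched M x) ∧
    (∀ e, p.edges.getLast? = some e → e ∉ M → ¬ Matched M y)

/-- An alternating cycle (with respect to `M`) in a graph `G'`:
the edges alternate cyclically between `M` and non-`M`. -/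
def IsAltCycle {W : Type u} (M : Set (Sym2 W)) {G' : SimpleGraph W} {x : W}
    (p : G'.Walk x x) : Prop :=
  p.IsCycle ∧ List.Chain' (altRel M) (p.edges ++ p.edges.take 1)

/-- `l` contains at least one edge labeled `+2`. -/
def OnePlusEdge {W : Type u} (pref : W → W → ℕ) (rk : W → ℕ) (l : List (Sym2 W)) : Prop :=
  ∃ e ∈ l, EdgePlus pref rk e

/-- `l` contains at least two edges labeled `+2`. -/
def TwoPlusEdges {W : Type u} (pref : W → W → ℕ) (rk : W → ℕ) (l : List (Sym2 W)) : Prop :=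
  ∃ e ∈ l, ∃ e' ∈ l, e ≠ e' ∧ EdgePlus pref rk e ∧ EdgePlus pref rk e'

/-- A vertex cover. -/
def IsVC {V : Type u} (G : SimpleGraph V) (U : Set V) : Prop :=
  ∀ ⦃x y : V⦄, G.Adj x y → x ∈ U ∨ y ∈ U
/-- An instance of Partitioned Vertex Cover: `G` is a finite simple graph, `P` is a
collection of pairwise disjoint edges of `G`, `T` is a collection of pairwise disjoint
3-element vertex sets each inducing a triangle in `G`, and every vertex of `G` lies in
exactly one member of `P ∪ T`. -/
def IsPVC {V : Type u} (G : SimpleGraph V) (P : Set (Sym2 V)) (T : Set (Finset V)) : Prop :=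
  Finite V ∧
  P ⊆ G.edgeSet ∧
  (∀ e ∈ P, ∀ e' ∈ P, e ≠ e' → ∀ v : V, v ∈ e → v ∉ e') ∧
  (∀ t ∈ T, t.card = 3) ∧
  (∀ t ∈ T, ∀ x ∈ t, ∀ y ∈ t, x ≠ y → G.Adj x y) ∧
  (∀ t ∈ T, ∀ t' ∈ T, t ≠ t' → ∀ v : V, v ∈ t → v ∉ t') ∧
  (∀ v : V, (∃ e ∈ P, v ∈ e) ∨ (∃ t ∈ T, v ∈ t)) ∧
  (∀ v : V, ¬ ((∃ e ∈ P, v ∈ e) ∧ (∃ t ∈ T, v ∈ t)))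

/-- A solution of a Partitioned Vertex Cover instance: a vertex cover `U` with
`|U ∩ P| = 1` for every pair `P` and `|U ∩ T| = 2` for every triple `T`. -/
def IsPVCSolution {V : Type u} (G : SimpleGraph V) (P : Set (Sym2 V)) (T : Set (Finset V))
    (U : Set V) : Prop :=
  IsVC G U ∧
  (∀ e ∈ P, {x : V | x ∈ e ∧ x ∈ U}.ncard = 1) ∧
  (∀ t ∈ T, {x : V | x ∈ t ∧ x ∈ U}.ncard = 2)

/-- The vertices of the graph `H` built from a Partitioned Vertex Cover instance:
`a i`, `b i`, `c i`, `d i` for a vertex `i` of `G`; `u i j` is the vertex `u^e_i` for the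
edge `e = {i,j}` of `G`; `f i j` is the vertex `f_{ij}` for the pair `{i,j} ∈ P`. -/
inductive Gad (V : Type u) : Type u where
  | a : V → Gad V
  | b : V → Gad V
  | c : V → Gad V
  | d : V → Gad V
  | u : V → V → Gad V
  | f : V → V → Gad V
deriving DecidableEq

/-- Which formal gadget vertices are really vertices of `H`. -/
def Gad.valid {V : Type u} (G : SimpleGraph V) (P : Set (Sym2 V)) : Gad V → Prop
  | .u i j => G.Adj i j
  | .f i j => s(i, j) ∈ P
  | _ => True

/-- The edges of `H`, up to symmetry. -/
inductive HBase {V : Type u} (G : SimpleGraph V) (P : Set (Sym2 V)) (T : Set (Finset V)) :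
    Gad V → Gad V → Prop where
  | da (i : V) : HBase G P T (.d i) (.a i)
  | ab (i : V) : HBase G P T (.a i) (.b i)
  | ac (i : V) : HBase G P T (.a i) (.c i)
  | bc (i : V) : HBase G P T (.b i) (.c i)
  | uu {i j : V} (h : G.Adj i j) : HBase G P T (.u i j) (.u j i)
  | bu {i j : V} (h : G.Adj i j) : HBase G P T (.b i) (.u i j)
  | df {i j : V} (h : s(i, j) ∈ P) : HBase G P T (.d i) (.f i j)
  | fc {i j : V} (h : s(i, j) ∈ P) : HBase G P T (.f i j) (.c j)
  | cd {i j : V} (h : s(i, j) ∈ P) : HBase G P T (.c i) (.d j)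
  | dd {i j : V} {t : Finset V} (ht : t ∈ T) (hi : i ∈ t) (hj : j ∈ t) (hne : i ≠ j) :
      HBase G P T (.d i) (.d j)
  | cc {i j : V} {t : Finset V} (ht : t ∈ T) (hi : i ∈ t) (hj : j ∈ t) (hne : i ≠ j) :
      HBase G P T (.c i) (.c j)

/-- The graph `H` of the Popular Matching instance built from `(G, P, T)`. -/
def Hgraph {V : Type u} (G : SimpleGraph V) (P : Set (Sym2 V)) (T : Set (Finset V)) :
    SimpleGraph {g : Gad V // Gad.valid G P g} where
  Adj x y := x ≠ y ∧ (HBase G P T x.1 y.1 ∨ HBase G P T y.1 x.1)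
  symm := ⟨fun _ _ h => ⟨h.1.symm, h.2.symm⟩⟩
  loopless := ⟨fun _ h => h.1 rfl⟩

/-- The Popular Matching instance (graph together with preference lists) constructed
from a Partitioned Vertex Cover instance `(G, P, T)`.  The field `pref` gives the
preference lists; all its values on the neighborhoods in `H` are pinned down, except
the ranks that `b i` assigns to the vertices `u^e_i`, which form an arbitrary fixed
bijection onto `{2, …, deg_G(i) + 1}`. -/
structure Reduction (V : Type u) [LinearOrder V] : Type u where
  G : SimpleGraph V
  P : Set (Sym2 V)
  T : Set (Finset V)
  ispvc : IsPVC G P T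
  pref : Gad V → Gad V → ℕ
  pref_ab : ∀ i : V, pref (.a i) (.b i) = 1
  pref_ac : ∀ i : V, pref (.a i) (.c i) = 2
  pref_ad : ∀ i : V, pref (.a i) (.d i) = 3
  pref_ba : ∀ i : V, pref (.b i) (.a i) = 1
  pref_bu : ∀ i : V, Set.BijOn (pref (.b i)) {g : Gad V | ∃ j : V, G.Adj i j ∧ g = .u i j}
      (Set.Icc 2 ((G.neighborSet i).ncard + 1))
  pref_bc : ∀ i : V, pref (.b i) (.c i) = (G.neighborSet i).ncard + 2
  pref_ca : ∀ i : V, pref (.c i) (.a i) = 1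
  pref_cb : ∀ i : V, pref (.c i) (.b i) = 2
  pref_da : ∀ i : V, pref (.d i) (.a i) = 1
  pref_uu : ∀ i j : V, G.Adj i j → pref (.u i j) (.u j i) = 1
  pref_ub : ∀ i j : V, G.Adj i j → pref (.u i j) (.b i) = 2
  pref_cf : ∀ i j : V, s(i, j) ∈ P → pref (.c i) (.f j i) = 3
  pref_cd : ∀ i j : V, s(i, j) ∈ P → pref (.c i) (.d j) = 4
  pref_dc : ∀ i j : V, s(i, j) ∈ P → pref (.d i) (.c j) = 2
  pref_df : ∀ i j : V, s(i, j) ∈ P → pref (.d i) (.f i j) = 3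
  pref_fd : ∀ i j : V, s(i, j) ∈ P → pref (.f i j) (.d i) = 1
  pref_fc : ∀ i j : V, s(i, j) ∈ P → pref (.f i j) (.c j) = 2
  pref_tri : ∀ t ∈ T, ∀ i j k : V, t = {i, j, k} → i < j → j < k →
    pref (.c i) (.c k) = 3 ∧ pref (.c i) (.c j) = 4 ∧
    pref (.c j) (.c i) = 3 ∧ pref (.c j) (.c k) = 4 ∧
    pref (.c k) (.c j) = 3 ∧ pref (.c k) (.c i) = 4 ∧
    pref (.d i) (.d j) = 2 ∧ pref (.d i) (.d k) = 3 ∧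
    pref (.d j) (.d k) = 2 ∧ pref (.d j) (.d i) = 3 ∧
    pref (.d k) (.d i) = 2 ∧ pref (.d k) (.d j) = 3

namespace Reduction

variable {V : Type u} [LinearOrder V] (R : Reduction V)

/-- The vertex set of `H`. -/
abbrev HV : Type u := {g : Gad V // Gad.valid R.G R.P g}

/-- The graph `H`. -/
def H : SimpleGraph R.HV := Hgraph R.G R.P R.T

/-- The preference lists of `H`, as a function on its vertices. -/
def prefH : R.HV → R.HV → ℕ := fun x y => R.pref x.1 y.1

/-- The vertex `a_i` of `H`. -/
def va (i : V) : R.HV := ⟨.a i, trivial⟩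
/-- The vertex `b_i` of `H`. -/
def vb (i : V) : R.HV := ⟨.b i, trivial⟩
/-- The vertex `c_i` of `H`. -/
def vc (i : V) : R.HV := ⟨.c i, trivial⟩
/-- The vertex `d_i` of `H`. -/
def vd (i : V) : R.HV := ⟨.d i, trivial⟩
/-- The vertex `u^e_i` of `H`, for an edge `e = {i,j}` of `G`. -/
def vu (i j : V) (h : R.G.Adj i j) : R.HV := ⟨.u i j, h⟩
/-- The vertex `f_{ij}` of `H`, for a pair `{i,j} ∈ P`. -/
def vf (i j : V) (h : s(i, j) ∈ R.P) : R.HV := ⟨.f i j, h⟩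

/-- The matching `M*` in `H` constructed from a solution `U`. -/
def Mstar (U : Set V) : Set (Sym2 R.HV) :=
  {e : Sym2 R.HV |
    (∃ (i j : V) (h : R.G.Adj i j), e = s(R.vu i j h, R.vu j i h.symm)) ∨
    (∃ (x y : V) (h : s(x, y) ∈ R.P) (h' : s(y, x) ∈ R.P), x ∉ U ∧ y ∈ U ∧
      (e = s(R.va x, R.vd x) ∨ e = s(R.vb x, R.vc x) ∨ e = s(R.va y, R.vb y) ∨
       e = s(R.vf x y h, R.vc y) ∨ e = s(R.vf y x h', R.vd y))) ∨
    (∃ t ∈ R.T, ∃ x y z : V, t = {x, y, z} ∧ x ∉ U ∧ y ∈ U ∧ z ∈ U ∧ y ≠ z ∧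
      R.pref (.d x) (.d y) < R.pref (.d x) (.d z) ∧
      (e = s(R.va x, R.vd x) ∨ e = s(R.vb x, R.vc x) ∨ e = s(R.va y, R.vb y) ∨
       e = s(R.va z, R.vb z) ∨ e = s(R.vc y, R.vc z) ∨ e = s(R.vd y, R.vd z)))}

end Reduction

/-- The vertex set of the Pair Selector gadget associated with a pair `{i,j}`. -/
def pairGadget {V : Type u} (i j : V) : Set (Gad V) :=
  {g : Gad V | ∃ x : V, (x = i ∨ x = j) ∧ (g = .a x ∨ g = .b x ∨ g = .c x ∨ g = .d x)} ∪
    {Gad.f i j, Gad.f j i}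

/-- The vertex set of the Triple Selector gadget associated with a triple `t`. -/
def tripleGadget {V : Type u} (t : Finset V) : Set (Gad V) :=
  {g : Gad V | ∃ x ∈ t, g = .a x ∨ g = .b x ∨ g = .c x ∨ g = .d x}

/-!
Popularity is used only through local switches: if replacing some edges of `M` by others changes
the partners of the vertices of a set `S` only, and more than half of `S` strictly gain, then `M`
is not popular.

In `H`, the mutual first choices `a_i b_i` and `u^e_i u^e_j` force `a_i`, `b_i` and every `u^e_i`
to be matched. Then `b_i` is never matched to a `u^e_i`: otherwise `b_j` is matched to `u^e_j`,
and switching to `u^e_i u^e_j, a_i b_i` wins four of six vertices. Hence if neither `a_i b_i` nor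
`a_j b_j` is in `M` for an edge `ij` of `G`, then `b_i c_i, a_i d_i, b_j c_j, a_j d_j ∈ M`, and
switching to `b_i u^e_i, a_i c_i, b_j u^e_j, a_j c_j` wins six of ten vertices: `U` is a vertex
cover.

If a pair `{i,j}` (resp. a triple `{i,j,k}`) lay inside `U`, then `d_i, c_j, f_{ij}`
(resp. `c_i, c_j, c_k`) would form a triangle with cyclic preferences which `M` can match only
internally; the vertex it leaves unmatched and its favourite in the triangle prefer each other.
Pairs and triples are cliques of `G`, so the vertex cover `U` misses exactly one vertex of each.
-/

section PopularMatching

variable {W : Type u} {G : SimpleGraph W} {pref : W → W → ℕ} {M : Set (Sym2 W)} {v w x y z : W}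

theorem mem_swap (h : s(x, y) ∈ M) : s(y, x) ∈ M := Sym2.eq_swap (a := x) ▸ h

theorem IsMatching.eq_of_mem_of_mem (hM : IsMatching G M) (h : s(v, w) ∈ M) (h' : s(v, x) ∈ M) :
    w = x := by
  by_contra hne
  exact hM.2 _ h _ h' (fun he => hne (Sym2.congr_right.mp he)) v (Sym2.mem_mk_left v w)
    (Sym2.mem_mk_left v x)

theorem rank_eq_of_mem (hM : IsMatching G M) (h : s(v, w) ∈ M) :
    rank G pref M v = pref v w := by
  have hex : ∃ x, s(v, x) ∈ M := ⟨w, h⟩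
  rw [rank, dif_pos hex, hM.eq_of_mem_of_mem hex.choose_spec h]

theorem rank_eq_of_not_matched (hv : ¬ Matched M v) :
    rank G pref M v = (G.neighborSet v).ncard + 1 :=
  dif_neg hv

theorem rank_congr {M' : Set (Sym2 W)} (h : ∀ w, s(v, w) ∈ M ↔ s(v, w) ∈ M') :
    rank G pref M v = rank G pref M' v := by
  have : (fun w => s(v, w) ∈ M) = fun w => s(v, w) ∈ M' := funext fun w => propext (h w)
  rw [rank, rank, this]

theorem length_le_ncard_neighborSet [Finite W] {l : List W} (hl : l.Nodup)
    (hadj : l.Forall (G.Adj v)) : l.length ≤ (G.neighborSet v).ncard := by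
  classical
  rw [← List.toFinset_card_of_nodup hl, ← Set.ncard_coe_finset]
  exact Set.ncard_le_ncard fun w hw =>
    List.forall_iff_forall_mem.mp hadj w (List.mem_toFinset.mp hw)

theorem lt_rank_of_not_matched [Finite W] (hv : ¬ Matched M v) {l : List W} (hl : l.Nodup)
    (hadj : l.Forall (G.Adj v)) : l.length < rank G pref M v := by
  rw [rank_eq_of_not_matched hv]
  exact Nat.lt_succ_of_le (length_le_ncard_neighborSet hl hadj)

theorem pref_lt_rank_of_not_matched (hv : ¬ Matched M v)
    (h : pref v w ≤ (G.neighborSet v).ncard) : pref v w < rank G pref M v := by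
  rw [rank_eq_of_not_matched hv]
  omega

theorem one_lt_rank [Finite W] (hM : IsMatching G M) (hvw : G.Adj v w) (h : s(v, w) ∉ M)
    (hpref : ∀ x, G.Adj v x → x ≠ w → 1 < pref v x) : 1 < rank G pref M v := by
  by_cases hv : Matched M v
  · obtain ⟨x, hx⟩ := hv
    rw [rank_eq_of_mem hM hx]
    exact hpref x (hM.1 hx) (by rintro rfl; exact h hx)
  · exact lt_rank_of_not_matched hv (l := [w]) (by simp) hvw

theorem IsPopular.two_mul_card_le (hM : IsPopular G pref M) {M' : Set (Sym2 W)}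
    (hM' : IsMatching G M') (S : Finset W) (hS : ∀ v ∉ S, rank G pref M' v = rank G pref M v)
    (T : Finset W) (hT : ∀ v ∈ T, rank G pref M' v < rank G pref M v) :
    2 * T.card ≤ S.card := by
  classical
  have hTS : T ⊆ S := fun v hv => by_contra fun hvS => (hT v hv).ne (hS v hvS)
  have hwin : T.card ≤ vote G pref M' M := by
    rw [← Set.ncard_coe_finset]
    refine Set.ncard_le_ncard hT (Set.Finite.subset S.finite_toSet fun v hv => ?_)
    by_contra hvS
    exact (show rank G pref M' v < rank G pref M v from hv).ne (hS v hvS)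
  have hlose : vote G pref M M' ≤ (S \ T).card := by
    rw [← Set.ncard_coe_finset]
    refine Set.ncard_le_ncard (fun v hv => ?_) (S \ T).finite_toSet
    replace hv : rank G pref M v < rank G pref M' v := hv
    simp only [Finset.coe_sdiff, Set.mem_sdiff, Finset.mem_coe]
    exact ⟨by_contra fun hvS => hv.ne' (hS v hvS), fun hvT => (hT v hvT).not_gt hv⟩
  have := hM.2 M' hM'
  have := Finset.card_sdiff_of_subset hTS
  have := Finset.card_le_card hTS
  omega

theorem IsMatching.switch {N : Set (Sym2 W)} {S : Set W} (hM : IsMatching G M)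
    (hN : IsMatching G N) (hNS : ∀ e ∈ N, ∀ v ∈ e, v ∈ S) :
    IsMatching G ({e ∈ M | ∀ v ∈ e, v ∉ S} ∪ N) := by
  refine ⟨fun e he => he.elim (fun he => hM.1 he.1) (fun he => hN.1 he), ?_⟩
  rintro e (⟨he, heS⟩ | he) e' (⟨he', heS'⟩ | he') hne v hv hv'
  · exact hM.2 e he e' he' hne v hv hv'
  · exact heS v hv (hNS e' he' v hv')
  · exact heS' v hv' (hNS e he v hv)
  · exact hN.2 e he e' he' hne v hv hv'

theorem rank_switch_of_notMem {N : Set (Sym2 W)} {S : Set W}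
    (hS : ∀ v w, s(v, w) ∈ M → v ∈ S → w ∈ S) (hNS : ∀ e ∈ N, ∀ v ∈ e, v ∈ S) (hv : v ∉ S) :
    rank G pref ({e ∈ M | ∀ v ∈ e, v ∉ S} ∪ N) v = rank G pref M v := by
  refine rank_congr fun w => ⟨fun h => ?_, fun h => Or.inl (show _ ∧ _ from ⟨h, ?_⟩)⟩
  · rcases h with ⟨h, -⟩ | h
    · exact h
    · exact absurd (hNS _ h v (Sym2.mem_mk_left v w)) hv
  · intro x hx hxS
    rcases Sym2.mem_iff.mp hx with rfl | rfl
    · exact hv hxS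
    · exact hv (hS x v (mem_swap h) hxS)

def pairVertices (l : List (W × W)) : List W := l.flatMap fun p => [p.1, p.2]

@[simp]
theorem mem_pairVertices {l : List (W × W)} :
    v ∈ pairVertices l ↔ ∃ p ∈ l, v = p.1 ∨ v = p.2 := by
  simp [pairVertices]

@[simp]
theorem length_pairVertices (l : List (W × W)) : (pairVertices l).length = 2 * l.length := by
  induction l with
  | nil => rfl
  | cons p l ih => simp [pairVertices] at ih ⊢; omega

theorem isMatching_of_nodup_pairVertices {N : List (W × W)} (hN : ∀ p ∈ N, G.Adj p.1 p.2)
    (hNd : (pairVertices N).Nodup) : IsMatching G {e | e ∈ N.map fun p => s(p.1, p.2)} := by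
  refine ⟨?_, ?_⟩
  · rintro _ he
    obtain ⟨p, hp, rfl⟩ := List.mem_map.mp he
    exact hN p hp
  · rintro _ he _ he' hne v hv hv'
    obtain ⟨p, hp, rfl⟩ := List.mem_map.mp he
    obtain ⟨q, hq, rfl⟩ := List.mem_map.mp he'
    have hpq : p ≠ q := by rintro rfl; exact hne rfl
    have : Std.Symm (Function.onFun List.Disjoint fun p : W × W => [p.1, p.2]) :=
      ⟨fun _ _ h => List.disjoint_comm.mp h⟩
    have hdisj := (List.nodup_flatMap.mp hNd).2.forall hp hq hpq
    exact hdisj (by simpa [Sym2.mem_iff] using hv) (by simpa [Sym2.mem_iff] using hv')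

/-- Compare `M` with the matching obtained by replacing the edges `D` of `M` by the edges `N`,
whose vertices lie on `D` or are unmatched (`U`): only the vertices of `D` and `U` change
partner, so at most half of them can gain. -/
theorem IsPopular.two_mul_length_le_of_switch (hM : IsPopular G pref M)
    {D : List (W × W)} (hD : ∀ p ∈ D, s(p.1, p.2) ∈ M) {U : List W}
    (hU : ∀ v ∈ U, ¬ Matched M v) {N : List (W × W)} (hN : ∀ p ∈ N, G.Adj p.1 p.2)
    (hNd : (pairVertices N).Nodup) (hND : pairVertices N ⊆ pairVertices D ++ U)
    {T : List W} (hT : T.Nodup)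
    (hwin : T.Forall fun v =>
      ∃ w, s(v, w) ∈ N.map (fun p => s(p.1, p.2)) ∧ pref v w < rank G pref M v) :
    2 * T.length ≤ 2 * D.length + U.length := by
  classical
  set S := pairVertices D ++ U
  have hS : ∀ v w, s(v, w) ∈ M → v ∈ {v | v ∈ S} → w ∈ {v | v ∈ S} := by
    intro v w hvw hv
    rcases List.mem_append.mp hv with hv | hv
    · obtain ⟨p, hp, rfl | rfl⟩ := mem_pairVertices.mp hv
      · rw [hM.1.eq_of_mem_of_mem hvw (hD p hp)]
        exact List.mem_append_left _ (mem_pairVertices.mpr ⟨p, hp, Or.inr rfl⟩)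
      · rw [hM.1.eq_of_mem_of_mem hvw (mem_swap (hD p hp))]
        exact List.mem_append_left _ (mem_pairVertices.mpr ⟨p, hp, Or.inl rfl⟩)
    · exact absurd ⟨w, hvw⟩ (hU v hv)
  have hNS : ∀ e ∈ {e | e ∈ N.map (fun p => s(p.1, p.2))}, ∀ v ∈ e, v ∈ {v | v ∈ S} := by
    rintro _ he v hv
    obtain ⟨p, hp, rfl⟩ := List.mem_map.mp he
    exact hND (mem_pairVertices.mpr ⟨p, hp, Sym2.mem_iff.mp hv⟩)
  have hM' := hM.1.switch (isMatching_of_nodup_pairVertices hN hNd) hNS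
  have key := hM.two_mul_card_le hM' S.toFinset
    (fun v hv => rank_switch_of_notMem hS hNS (by simpa using hv)) T.toFinset fun v hv => by
      obtain ⟨w, hw, hlt⟩ := List.forall_iff_forall_mem.mp hwin v (List.mem_toFinset.mp hv)
      rwa [rank_eq_of_mem hM' (Or.inr hw)]
  rw [List.toFinset_card_of_nodup hT] at key
  have hlen : S.length = 2 * D.length + U.length := by simp [S]
  have := S.toFinset_card_le
  omega

theorem IsPopular.not_blocking_of_not_matched (hM : IsPopular G pref M) (hxy : G.Adj x y)
    (hx : ¬ Matched M x) : ¬ (pref x y < rank G pref M x ∧ pref y x < rank G pref M y) := by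
  rintro ⟨hxr, hyr⟩
  have hwin : [x, y].Forall fun v =>
      ∃ w, s(v, w) ∈ [(x, y)].map (fun p => s(p.1, p.2)) ∧ pref v w < rank G pref M v :=
    ⟨⟨y, by simp, hxr⟩, ⟨x, by simp [Sym2.eq_swap], hyr⟩⟩
  by_cases hy : Matched M y
  · obtain ⟨w, hw⟩ := hy
    have := hM.two_mul_length_le_of_switch (D := [(y, w)]) (by simpa using hw) (U := [x])
      (by simpa using hx) (by simpa using hxy) (by simp [pairVertices, hxy.ne])
      (by simp [pairVertices]) (by simp [hxy.ne]) hwin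
    simp at this
  · have := hM.two_mul_length_le_of_switch (D := []) (by simp) (U := [x, y])
      (by simp [hx, hy]) (by simpa using hxy) (by simp [pairVertices, hxy.ne])
      (by simp [pairVertices]) (by simp [hxy.ne]) hwin
    simp at this

structure CyclicCorner (G : SimpleGraph W) (pref : W → W → ℕ) (M : Set (Sym2 W)) (x y z : W) :
    Prop where
  adj : G.Adj x y
  pref_lt : pref x y < pref x z
  -- so that `x` prefers both `y` and `z` to being unmatched
  pref_le : pref x z ≤ (G.neighborSet x).ncard
  partner : ∀ w, s(x, w) ∈ M → w = y ∨ w = z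

theorem IsPopular.notMem_of_cyclicCorner (hM : IsPopular G pref M)
    (hy : CyclicCorner G pref M y z x) (hz : CyclicCorner G pref M z x y) : s(x, y) ∉ M := by
  intro hxy
  have hz' : ¬ Matched M z := by
    rintro ⟨w, hw⟩
    rcases hz.partner w hw with rfl | rfl
    · exact hy.adj.ne (hM.1.eq_of_mem_of_mem hxy (mem_swap hw))
    · exact hz.adj.ne (hM.1.eq_of_mem_of_mem (mem_swap hxy) (mem_swap hw)).symm
  refine hM.not_blocking_of_not_matched hy.adj.symm hz' ⟨?_, ?_⟩
  · exact pref_lt_rank_of_not_matched hz' hz.pref_le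
  · rw [rank_eq_of_mem hM.1 (mem_swap hxy)]
    exact hy.pref_lt

theorem IsPopular.not_cyclic_triangle (hM : IsPopular G pref M)
    (hx : CyclicCorner G pref M x y z) (hy : CyclicCorner G pref M y z x)
    (hz : CyclicCorner G pref M z x y) : False := by
  by_cases hxm : Matched M x
  · obtain ⟨w, hw⟩ := hxm
    rcases hx.partner w hw with rfl | rfl
    · exact hM.notMem_of_cyclicCorner hy hz hw
    · exact hM.notMem_of_cyclicCorner hx hy (mem_swap hw)
  by_cases hym : Matched M y
  · obtain ⟨w, hw⟩ := hym
    rcases hy.partner w hw with rfl | rfl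
    · exact hM.notMem_of_cyclicCorner hz hx hw
    · exact hxm ⟨y, mem_swap hw⟩
  refine hM.not_blocking_of_not_matched hx.adj hxm ⟨?_, ?_⟩
  · exact pref_lt_rank_of_not_matched hxm (hx.pref_lt.le.trans hx.pref_le)
  · exact pref_lt_rank_of_not_matched hym hy.pref_le

theorem IsVC.ncard_inter_of_isClique {V : Type u} {H : SimpleGraph V} {U t : Set V}
    (hU : IsVC H U) (ht : H.IsClique t) {x : V} (hx : x ∈ t) (hxU : x ∉ U) :
    {y | y ∈ t ∧ y ∈ U}.ncard = t.ncard - 1 := by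
  have : {y | y ∈ t ∧ y ∈ U} = t \ {x} := by
    ext y
    refine ⟨fun ⟨hy, hyU⟩ => ⟨hy, by rintro rfl; exact hxU hyU⟩, fun ⟨hy, hyx⟩ => ⟨hy, ?_⟩⟩
    exact (hU (ht hx hy (Ne.symm hyx))).resolve_left hxU
  rw [this, Set.ncard_sdiff_singleton_of_mem hx]

end PopularMatching

theorem Finset.exists_lt_lt_of_card_eq_three {α : Type*} [LinearOrder α] {s : Finset α}
    (h : s.card = 3) : ∃ a b c, a < b ∧ b < c ∧ s = {a, b, c} := by
  set f := s.orderEmbOfFin h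
  refine ⟨f 0, f 1, f 2, f.strictMono (by decide), f.strictMono (by decide), ?_⟩
  ext x
  rw [← Finset.mem_coe, ← Finset.range_orderEmbOfFin s h, Set.mem_range, Fin.exists_fin_succ,
    Fin.exists_fin_succ, Fin.exists_fin_one]
  simp [eq_comm, f]

namespace Reduction

variable {V : Type u} [LinearOrder V] (R : Reduction V) {M : Set (Sym2 R.HV)} {i j k : V}

theorem finite_HV : Finite R.HV := by
  have : Finite V := R.ispvc.1
  have : Finite (Gad V) := by
    refine Finite.of_surjective (fun p : Fin 6 × V × V =>
      (![Gad.a p.2.1, .b p.2.1, .c p.2.1, .d p.2.1, .u p.2.1 p.2.2, .f p.2.1 p.2.2] : Fin 6 → Gad V)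
        p.1) fun g => ?_
    cases g with
    | a i => exact ⟨(0, i, i), rfl⟩
    | b i => exact ⟨(1, i, i), rfl⟩
    | c i => exact ⟨(2, i, i), rfl⟩
    | d i => exact ⟨(3, i, i), rfl⟩
    | u i j => exact ⟨(4, i, j), rfl⟩
    | f i j => exact ⟨(5, i, j), rfl⟩
  exact Subtype.finite

@[simp] theorem va_val : (R.va i).1 = .a i := rfl
@[simp] theorem vb_val : (R.vb i).1 = .b i := rfl
@[simp] theorem vc_val : (R.vc i).1 = .c i := rfl
@[simp] theorem vd_val : (R.vd i).1 = .d i := rfl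
@[simp] theorem vu_val (h : R.G.Adj i j) : (R.vu i j h).1 = .u i j := rfl
@[simp] theorem vf_val (h : s(i, j) ∈ R.P) : (R.vf i j h).1 = .f i j := rfl
@[simp] theorem prefH_apply (x y : R.HV) : R.prefH x y = R.pref x.1 y.1 := rfl

attribute [local simp] Subtype.ext_iff pref_ab pref_ac pref_ad pref_ba pref_bc pref_ca
  pref_cb pref_da pref_uu pref_ub pref_cf pref_cd pref_dc pref_df pref_fd pref_fc

theorem adj_ab : R.H.Adj (R.va i) (R.vb i) := ⟨by simp, .inl (.ab i)⟩
theorem adj_ac : R.H.Adj (R.va i) (R.vc i) := ⟨by simp, .inl (.ac i)⟩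
theorem adj_ad : R.H.Adj (R.va i) (R.vd i) := ⟨by simp, .inr (.da i)⟩
theorem adj_bc : R.H.Adj (R.vb i) (R.vc i) := ⟨by simp, .inl (.bc i)⟩
theorem adj_bu (h : R.G.Adj i j) : R.H.Adj (R.vb i) (R.vu i j h) := ⟨by simp, .inl (.bu h)⟩
theorem adj_uu (h : R.G.Adj i j) : R.H.Adj (R.vu i j h) (R.vu j i h.symm) :=
  ⟨by simp [h.ne], .inl (.uu h)⟩
theorem adj_cd (h : s(i, j) ∈ R.P) : R.H.Adj (R.vc i) (R.vd j) := ⟨by simp, .inl (.cd h)⟩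
theorem adj_df (h : s(i, j) ∈ R.P) : R.H.Adj (R.vd i) (R.vf i j h) := ⟨by simp, .inl (.df h)⟩
theorem adj_fc (h : s(i, j) ∈ R.P) : R.H.Adj (R.vf i j h) (R.vc j) := ⟨by simp, .inl (.fc h)⟩
theorem adj_cc {t : Finset V} (ht : t ∈ R.T) (hi : i ∈ t) (hj : j ∈ t) (hij : i ≠ j) :
    R.H.Adj (R.vc i) (R.vc j) :=
  ⟨by simp [hij], .inl (.cc ht hi hj hij)⟩

variable {x : R.HV}

theorem eq_of_adj_va (h : R.H.Adj (R.va i) x) : x = R.vb i ∨ x = R.vc i ∨ x = R.vd i := by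
  obtain ⟨x, hx⟩ := x
  rcases h.2 with h | h <;> cases h <;> simp

theorem eq_of_adj_vb (h : R.H.Adj (R.vb i) x) :
    x = R.va i ∨ x = R.vc i ∨ ∃ j, ∃ h : R.G.Adj i j, x = R.vu i j h := by
  obtain ⟨x, hx⟩ := x
  rcases h.2 with h | h <;> cases h <;> simp [*]

theorem eq_of_adj_vu {hij : R.G.Adj i j} (h : R.H.Adj (R.vu i j hij) x) :
    x = R.vu j i hij.symm ∨ x = R.vb i := by
  obtain ⟨x, hx⟩ := x
  rcases h.2 with h | h <;> cases h <;> simp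

theorem eq_of_adj_vc (h : R.H.Adj (R.vc i) x) :
    x = R.va i ∨ x = R.vb i ∨ (∃ j, ∃ h : s(j, i) ∈ R.P, x = R.vf j i h) ∨
      (∃ j, s(i, j) ∈ R.P ∧ x = R.vd j) ∨
      ∃ j, ∃ t ∈ R.T, i ∈ t ∧ j ∈ t ∧ x = R.vc j := by
  obtain ⟨x, hx⟩ := x
  rcases h.2 with h | h <;> cases h <;> simp_all <;> exact ⟨_, ‹_›, ‹_›, ‹_›⟩

theorem eq_of_adj_vd (h : R.H.Adj (R.vd i) x) :
    x = R.va i ∨ (∃ j, ∃ h : s(i, j) ∈ R.P, x = R.vf i j h) ∨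
      (∃ j, s(j, i) ∈ R.P ∧ x = R.vc j) ∨ ∃ j, ∃ t ∈ R.T, i ∈ t ∧ j ∈ t ∧ x = R.vd j := by
  obtain ⟨x, hx⟩ := x
  rcases h.2 with h | h <;> cases h <;> simp_all <;> exact ⟨_, ‹_›, ‹_›, ‹_›⟩

theorem eq_of_adj_vf {hij : s(i, j) ∈ R.P} (h : R.H.Adj (R.vf i j hij) x) :
    x = R.vd i ∨ x = R.vc j := by
  obtain ⟨x, hx⟩ := x
  rcases h.2 with h | h <;> cases h <;> simp

theorem adj_of_mem_P (h : s(i, j) ∈ R.P) : R.G.Adj i j := R.ispvc.2.1 h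

theorem eq_of_mem_P (h : s(i, j) ∈ R.P) (h' : s(i, k) ∈ R.P) : k = j := by
  by_contra hne
  exact R.ispvc.2.2.1 _ h' _ h (fun he => hne (Sym2.congr_right.mp he)) i
    (Sym2.mem_mk_left i k) (Sym2.mem_mk_left i j)

theorem notMem_T_of_mem_P (h : s(i, j) ∈ R.P) {t : Finset V} (ht : t ∈ R.T) : i ∉ t :=
  fun hi => R.ispvc.2.2.2.2.2.2.2 i ⟨⟨_, h, Sym2.mem_mk_left i j⟩, t, ht, hi⟩

theorem eq_of_mem_T {t t' : Finset V} (ht : t ∈ R.T) (ht' : t' ∈ R.T) (hi : i ∈ t)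
    (hi' : i ∈ t') : t' = t := by
  by_contra hne
  exact R.ispvc.2.2.2.2.2.1 t' ht' t ht hne i hi' hi

theorem isClique_of_mem_T {t : Finset V} (ht : t ∈ R.T) : R.G.IsClique (t : Set V) :=
  fun x hx y hy hne => R.ispvc.2.2.2.2.1 t ht x hx y hy hne

theorem pref_vb_vu_bounds (h : R.G.Adj i j) :
    1 < R.prefH (R.vb i) (R.vu i j h) ∧
      R.prefH (R.vb i) (R.vu i j h) < (R.G.neighborSet i).ncard + 2 :=
  have := (R.pref_bu i).mapsTo ⟨j, h, rfl⟩
  ⟨this.1, Nat.lt_succ_of_le this.2⟩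

theorem one_lt_rank_va (hM : IsMatching R.H M) (h : s(R.va i, R.vb i) ∉ M) :
    1 < rank R.H R.prefH M (R.va i) :=
  haveI := R.finite_HV
  one_lt_rank hM R.adj_ab h fun x hx hxb => by
    rcases R.eq_of_adj_va hx with rfl | rfl | rfl <;> simp_all

theorem one_lt_rank_vb (hM : IsMatching R.H M) (h : s(R.va i, R.vb i) ∉ M) :
    1 < rank R.H R.prefH M (R.vb i) :=
  haveI := R.finite_HV
  one_lt_rank hM R.adj_ab.symm (fun h' => h (mem_swap h')) fun x hx hxa => by
    rcases R.eq_of_adj_vb hx with rfl | rfl | ⟨j, hj, rfl⟩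
    · exact absurd rfl hxa
    · simp
    · exact (R.pref_vb_vu_bounds hj).1

theorem one_lt_rank_vu (hM : IsMatching R.H M) {h : R.G.Adj i j}
    (hu : s(R.vu i j h, R.vu j i h.symm) ∉ M) : 1 < rank R.H R.prefH M (R.vu i j h) :=
  haveI := R.finite_HV
  one_lt_rank hM (R.adj_uu h) hu fun x hx hxu => by
    rcases R.eq_of_adj_vu hx with rfl | rfl <;> simp_all

theorem matched_va (hM : IsPopular R.H R.prefH M) (i : V) : Matched M (R.va i) := by
  by_contra ha
  have hab : s(R.va i, R.vb i) ∉ M := fun h => ha ⟨_, h⟩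
  exact hM.not_blocking_of_not_matched R.adj_ab ha
    ⟨by simpa using R.one_lt_rank_va hM.1 hab, by simpa using R.one_lt_rank_vb hM.1 hab⟩

theorem matched_vb (hM : IsPopular R.H R.prefH M) (i : V) : Matched M (R.vb i) := by
  by_contra hb
  have hab : s(R.va i, R.vb i) ∉ M := fun h => hb ⟨_, mem_swap h⟩
  exact hM.not_blocking_of_not_matched R.adj_ab.symm hb
    ⟨by simpa using R.one_lt_rank_vb hM.1 hab, by simpa using R.one_lt_rank_va hM.1 hab⟩

theorem matched_vu (hM : IsPopular R.H R.prefH M) (h : R.G.Adj i j) : Matched M (R.vu i j h) := by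
  by_contra hu
  have huu : s(R.vu j i h.symm, R.vu i j h) ∉ M := fun h' => hu ⟨_, mem_swap h'⟩
  exact hM.not_blocking_of_not_matched (R.adj_uu h) hu
    ⟨by simpa [h] using R.one_lt_rank_vu hM.1 (fun h' => huu (mem_swap h')),
      by simpa [h.symm] using R.one_lt_rank_vu hM.1 huu⟩

theorem vb_vu_notMem (hM : IsPopular R.H R.prefH M) (h : R.G.Adj i j) :
    s(R.vb i, R.vu i j h) ∉ M := by
  intro hbi
  have hbj : s(R.vb j, R.vu j i h.symm) ∈ M := by
    obtain ⟨w, hw⟩ := R.matched_vu hM h.symm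
    rcases R.eq_of_adj_vu (hM.1.1 hw) with rfl | rfl
    · simpa using hM.1.eq_of_mem_of_mem (mem_swap hbi) (mem_swap hw)
    · exact mem_swap hw
  obtain ⟨x, hx⟩ := R.matched_va hM i
  have hab : s(R.va i, R.vb i) ∉ M := fun hab => by
    simpa using hM.1.eq_of_mem_of_mem (mem_swap hab) hbi
  have ha := R.one_lt_rank_va hM.1 hab
  have hb := R.pref_vb_vu_bounds h
  have := hM.two_mul_length_le_of_switch
    (D := [(R.vb i, R.vu i j h), (R.vb j, R.vu j i h.symm), (R.va i, x)]) (U := [])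
    (N := [(R.vu i j h, R.vu j i h.symm), (R.va i, R.vb i)])
    (T := [R.vu i j h, R.vu j i h.symm, R.vb i, R.va i])
    (by simp [hbi, hbj, hx]) (by simp) (by simp [R.adj_uu, R.adj_ab]) (by simp [pairVertices, h.ne])
    (by simp [pairVertices]) (by simp [h.ne])
    ⟨⟨R.vu j i h.symm, by simp, by rw [rank_eq_of_mem hM.1 (mem_swap hbi)]; simp [h]⟩,
      ⟨R.vu i j h, by simp, by rw [rank_eq_of_mem hM.1 (mem_swap hbj)]; simp [h.symm]⟩,
      ⟨R.va i, by simp, by rw [rank_eq_of_mem hM.1 hbi]; simpa using hb.1⟩,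
      ⟨R.vb i, by simp, by simpa using ha⟩⟩
  simp at this

theorem vu_vu_mem (hM : IsPopular R.H R.prefH M) (h : R.G.Adj i j) :
    s(R.vu i j h, R.vu j i h.symm) ∈ M := by
  obtain ⟨w, hw⟩ := R.matched_vu hM h
  rcases R.eq_of_adj_vu (hM.1.1 hw) with rfl | rfl
  · exact hw
  · exact absurd (mem_swap hw) (R.vb_vu_notMem hM h)

theorem vb_vc_mem (hM : IsPopular R.H R.prefH M) (hi : s(R.va i, R.vb i) ∉ M) :
    s(R.vb i, R.vc i) ∈ M := by
  obtain ⟨w, hw⟩ := R.matched_vb hM i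
  rcases R.eq_of_adj_vb (hM.1.1 hw) with rfl | rfl | ⟨j, hj, rfl⟩
  · exact absurd (mem_swap hw) hi
  · exact hw
  · exact absurd hw (R.vb_vu_notMem hM hj)

theorem va_vd_mem (hM : IsPopular R.H R.prefH M) (hi : s(R.va i, R.vb i) ∉ M) :
    s(R.va i, R.vd i) ∈ M := by
  obtain ⟨w, hw⟩ := R.matched_va hM i
  rcases R.eq_of_adj_va (hM.1.1 hw) with rfl | rfl | rfl
  · exact absurd hw hi
  · simpa using hM.1.eq_of_mem_of_mem (mem_swap hw) (mem_swap (R.vb_vc_mem hM hi))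
  · exact hw

theorem isVC (hM : IsPopular R.H R.prefH M) : IsVC R.G {i | s(R.va i, R.vb i) ∈ M} := by
  intro i j h
  rw [or_iff_not_imp_left]
  intro hi
  by_contra hj
  have := hM.two_mul_length_le_of_switch
    (D := [(R.vu i j h, R.vu j i h.symm), (R.vb i, R.vc i), (R.va i, R.vd i), (R.vb j, R.vc j),
      (R.va j, R.vd j)]) (U := [])
    (N := [(R.vb i, R.vu i j h), (R.va i, R.vc i), (R.vb j, R.vu j i h.symm), (R.va j, R.vc j)])
    (T := [R.vb i, R.va i, R.vc i, R.vb j, R.va j, R.vc j])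
    (by simp [R.vu_vu_mem hM h, R.vb_vc_mem hM hi, R.va_vd_mem hM hi, R.vb_vc_mem hM hj,
      R.va_vd_mem hM hj]) (by simp) (by simp [R.adj_bu, R.adj_ac]) (by simp [pairVertices, h.ne])
    (by simp [pairVertices]) (by simp [h.ne])
    ⟨⟨R.vu i j h, by simp, by
        rw [rank_eq_of_mem hM.1 (R.vb_vc_mem hM hi)]; simpa using (R.pref_vb_vu_bounds h).2⟩,
      ⟨R.vc i, by simp, by rw [rank_eq_of_mem hM.1 (R.va_vd_mem hM hi)]; simp⟩,
      ⟨R.va i, by simp, by rw [rank_eq_of_mem hM.1 (mem_swap (R.vb_vc_mem hM hi))]; simp⟩,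
      ⟨R.vu j i h.symm, by simp, by
        rw [rank_eq_of_mem hM.1 (R.vb_vc_mem hM hj)]; simpa using (R.pref_vb_vu_bounds h.symm).2⟩,
      ⟨R.vc j, by simp, by rw [rank_eq_of_mem hM.1 (R.va_vd_mem hM hj)]; simp⟩,
      ⟨R.va j, by simp, by rw [rank_eq_of_mem hM.1 (mem_swap (R.vb_vc_mem hM hj))]; simp⟩⟩
  simp at this

theorem isClique_of_mem_P {e : Sym2 V} (he : e ∈ R.P) : R.G.IsClique {x | x ∈ e} := by
  induction e using Sym2.ind with
  | _ i j =>
    have h := R.adj_of_mem_P he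
    intro x hx y hy hxy
    rcases Sym2.mem_iff.mp hx with rfl | rfl <;> rcases Sym2.mem_iff.mp hy with rfl | rfl
    exacts [absurd rfl hxy, h, h.symm, absurd rfl hxy]

theorem ncard_of_mem_P {e : Sym2 V} (he : e ∈ R.P) : {x | x ∈ e}.ncard = 2 := by
  induction e using Sym2.ind with
  | _ i j =>
    have : {x | x ∈ s(i, j)} = {i, j} := by ext; simp
    rw [this, Set.ncard_pair (R.adj_of_mem_P he).ne]

theorem cyclicCorner_vd (hM : IsMatching R.H M) (he : s(i, j) ∈ R.P)
    (hai : s(R.va i, R.vb i) ∈ M) : CyclicCorner R.H R.prefH M (R.vd i) (R.vc j) (R.vf i j he) := by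
  have := R.finite_HV
  have he' : s(j, i) ∈ R.P := mem_swap he
  refine ⟨(R.adj_cd he').symm, by simp [he], ?_, fun w hw => ?_⟩
  · simpa [he] using length_le_ncard_neighborSet (l := [R.va i, R.vf i j he, R.vc j])
      (by simp) ⟨R.adj_ad.symm, R.adj_df he, (R.adj_cd he').symm⟩
  rcases R.eq_of_adj_vd (hM.1 hw) with rfl | ⟨k, hk, rfl⟩ | ⟨k, hk, rfl⟩ | ⟨k, t, ht, hit, -⟩
  · simpa using hM.eq_of_mem_of_mem (mem_swap hw) hai
  · obtain rfl := R.eq_of_mem_P he hk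
    exact Or.inr rfl
  · obtain rfl := R.eq_of_mem_P he (mem_swap hk)
    exact Or.inl rfl
  · exact absurd hit (R.notMem_T_of_mem_P he ht)

theorem cyclicCorner_vc_of_mem_P (hM : IsMatching R.H M) (he : s(i, j) ∈ R.P)
    (haj : s(R.va j, R.vb j) ∈ M) : CyclicCorner R.H R.prefH M (R.vc j) (R.vf i j he) (R.vd i) := by
  have := R.finite_HV
  have he' : s(j, i) ∈ R.P := mem_swap he
  refine ⟨(R.adj_fc he).symm, by simp [he'], ?_, fun w hw => ?_⟩
  · simpa [he'] using length_le_ncard_neighborSet (l := [R.va j, R.vb j, R.vf i j he, R.vd i])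
      (by simp) ⟨R.adj_ac.symm, R.adj_bc.symm, (R.adj_fc he).symm, R.adj_cd he'⟩
  rcases R.eq_of_adj_vc (hM.1 hw) with rfl | rfl | ⟨k, hk, rfl⟩ | ⟨k, hk, rfl⟩ |
    ⟨k, t, ht, hjt, -⟩
  · simpa using hM.eq_of_mem_of_mem (mem_swap hw) haj
  · simpa using hM.eq_of_mem_of_mem (mem_swap hw) (mem_swap haj)
  · obtain rfl := R.eq_of_mem_P he' (mem_swap hk)
    exact Or.inl rfl
  · obtain rfl := R.eq_of_mem_P he' hk
    exact Or.inr rfl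
  · exact absurd hjt (R.notMem_T_of_mem_P he' ht)

theorem cyclicCorner_vf (hM : IsMatching R.H M) (he : s(i, j) ∈ R.P) :
    CyclicCorner R.H R.prefH M (R.vf i j he) (R.vd i) (R.vc j) := by
  have := R.finite_HV
  refine ⟨(R.adj_df he).symm, by simp [he], ?_, fun w hw => R.eq_of_adj_vf (hM.1 hw)⟩
  simpa [he] using length_le_ncard_neighborSet (l := [R.vd i, R.vc j]) (by simp)
    ⟨(R.adj_df he).symm, R.adj_fc he⟩

theorem exists_va_vb_notMem_of_mem_P (hM : IsPopular R.H R.prefH M) {e : Sym2 V}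
    (he : e ∈ R.P) : ∃ x ∈ e, s(R.va x, R.vb x) ∉ M := by
  induction e using Sym2.ind with
  | _ i j =>
    by_contra! hsel
    exact hM.not_cyclic_triangle
      (R.cyclicCorner_vd hM.1 he (hsel i (Sym2.mem_mk_left i j)))
      (R.cyclicCorner_vc_of_mem_P hM.1 he (hsel j (Sym2.mem_mk_right i j)))
      (R.cyclicCorner_vf hM.1 he)

theorem cyclicCorner_vc_of_mem_T (hM : IsMatching R.H M) {t : Finset V} (ht : t ∈ R.T)
    (hsel : ∀ m ∈ t, s(R.va m, R.vb m) ∈ M) (hi : i ∈ t) (hj : j ∈ t) (hk : k ∈ t)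
    (hij : i ≠ j) (hik : i ≠ k) (hjk : j ≠ k) (ht3 : ∀ m ∈ t, m = i ∨ m = j ∨ m = k)
    (hpj : R.pref (.c i) (.c j) = 3) (hpk : R.pref (.c i) (.c k) = 4) :
    CyclicCorner R.H R.prefH M (R.vc i) (R.vc j) (R.vc k) := by
  have := R.finite_HV
  refine ⟨R.adj_cc ht hi hj hij, by simp [hpj, hpk], ?_, fun w hw => ?_⟩
  · simpa [hpk] using length_le_ncard_neighborSet (l := [R.va i, R.vb i, R.vc j, R.vc k])
      (by simp [hjk]) ⟨R.adj_ac.symm, R.adj_bc.symm, R.adj_cc ht hi hj hij, R.adj_cc ht hi hk hik⟩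
  rcases R.eq_of_adj_vc (hM.1 hw) with rfl | rfl | ⟨m, hm, rfl⟩ | ⟨m, hm, rfl⟩ |
    ⟨m, t', ht', hit', hmt', rfl⟩
  · simpa using hM.eq_of_mem_of_mem (mem_swap hw) (hsel i hi)
  · simpa using hM.eq_of_mem_of_mem (mem_swap hw) (mem_swap (hsel i hi))
  · exact absurd hi (R.notMem_T_of_mem_P (mem_swap hm) ht)
  · exact absurd hi (R.notMem_T_of_mem_P hm ht)
  · obtain rfl := R.eq_of_mem_T ht ht' hi hit'
    rcases ht3 m hmt' with rfl | rfl | rfl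
    · exact absurd (hM.1 hw) (R.H.loopless.irrefl _)
    · exact Or.inl rfl
    · exact Or.inr rfl

theorem exists_va_vb_notMem_of_mem_T (hM : IsPopular R.H R.prefH M) {t : Finset V}
    (ht : t ∈ R.T) : ∃ x ∈ t, s(R.va x, R.vb x) ∉ M := by
  by_contra! hsel
  obtain ⟨i, j, k, hij, hjk, rfl⟩ := Finset.exists_lt_lt_of_card_eq_three (R.ispvc.2.2.2.1 _ ht)
  obtain ⟨p1, p2, p3, p4, p5, p6, -⟩ := R.pref_tri _ ht i j k rfl hij hjk
  have hik := hij.trans hjk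
  exact hM.not_cyclic_triangle
    (R.cyclicCorner_vc_of_mem_T hM.1 ht hsel (by simp) (by simp) (by simp) hik.ne hij.ne
      hjk.ne' (by simp) p1 p2)
    (R.cyclicCorner_vc_of_mem_T hM.1 ht hsel (by simp) (by simp) (by simp) hjk.ne' hik.ne'
      hij.ne' (by simp) p5 p6)
    (R.cyclicCorner_vc_of_mem_T hM.1 ht hsel (by simp) (by simp) (by simp) hij.ne' hjk.ne
      hik.ne (by simp) p3 p4)

end Reduction

/-- **Reverse direction.** If `M` is a popular matching in `H`, then
`U = {i ∈ V(G) : {a_i, b_i} ∈ M}` is a solution of the Partitioned Vertex Cover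
instance `(G, P, T)`. -/
theorem popular_gives_pvc_solution {V : Type u} [LinearOrder V] (R : Reduction V)
    (M : Set (Sym2 R.HV)) (hM : IsPopular R.H R.prefH M) :
    IsPVCSolution R.G R.P R.T {i : V | s(R.va i, R.vb i) ∈ M} := by
  have hU := R.isVC hM
  refine ⟨hU, fun e he => ?_, fun t ht => ?_⟩
  · obtain ⟨x, hx, hxU⟩ := R.exists_va_vb_notMem_of_mem_P hM he
    have := hU.ncard_inter_of_isClique (R.isClique_of_mem_P he) (t := {y | y ∈ e}) hx hxU
    rwa [R.ncard_of_mem_P he] at this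
  · obtain ⟨x, hx, hxU⟩ := R.exists_va_vb_notMem_of_mem_T hM ht
    have := hU.ncard_inter_of_isClique (R.isClique_of_mem_T ht) (Finset.mem_coe.mpr hx) hxU
    rwa [Set.ncard_coe_finset, R.ispvc.2.2.2.1 t ht] at this
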